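/- arXiv:2304.06592 — 2 statements merged into one kernel-verified Lean document; each statement's English description precedes it below -/
import Mathlib

section
/- Evolution equation of the smoothing density (forward–backward product rule for the hybrid master equation): let π, β : ℕ^l × ℝ^m × [0,∞) → ℝ with β everywhere strictly positive. Assume each fast propensity κᶜ_j(u,·) is twice continuously differentiable, and for each u the maps (v,t) ↦ π(u,v,t) and (v,t) ↦ β(u,v,t) are twice continuously differentiable in v and differentiable in t. Suppose that pointwise ∂_t π(u,v,t) = (𝒜 π(·,·,t))(u,v) and ∂_t β(u,v,t) = −(𝒜† β(·,·,t))(u,v). Fix a constant Z̃ > 0 and define π̃(u,v,t) = Z̃^{-1} β(u,v,t) π(u,v,t). Then pointwise ∂_t π̃(u,v,t) = − Σ_{j=1}^{m} ∂_{v_j}[ (κᶜ_j(u,v) + κᶜ_j(u,v) ∂_{v_j} log β(u,v,t)) π̃(u,v,t) ] + ½ Σ_{j=1}^{m} ∂²_{v_j}( κᶜ_j(u,v) π̃(u,v,t) ) + Σ_{i=1}^{l} κᴰ_i(u−e_i,v) π̃(u−e_i,v,t) β(u,v,t)/β(u−e_i,v,t) − Σ_{i=1}^{l} κᴰ_i(u,v)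 π̃(u,v,t) β(u+e_i,v,t)/β(u,v,t), where any term containing u − e_i is zero when u_i = 0. -/
open MeasureTheory

/-- Partial derivative in the `j`-th continuous coordinate. -/
noncomputable def pderiv' {m : ℕ} (j : Fin m) (f : (Fin m → ℝ) → ℝ) : (Fin m → ℝ) → ℝ :=
  fun v => deriv (fun t => f (Function.update v j t)) (v j)

/-- The hybrid master equation operator 𝒜.  Any term containing `u - e_i` is
taken to be zero when `u i = 0`. -/
noncomputable def hmeOp {l m : ℕ}
    (κD : Fin l → (Fin l → ℕ) → (Fin m → ℝ) → ℝ)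
    (κC : Fin m → (Fin l → ℕ) → (Fin m → ℝ) → ℝ)
    (f : (Fin l → ℕ) → (Fin m → ℝ) → ℝ) :
    (Fin l → ℕ) → (Fin m → ℝ) → ℝ :=
  fun u v =>
    (∑ i : Fin l,
      ((if u i = 0 then 0
        else κD i (u - Pi.single i 1) v * f (u - Pi.single i 1) v) - κD i u v * f u v))
    - (∑ j : Fin m, pderiv' j (fun w => κC j u w * f u w) v)
    + (1 / 2) * ∑ j : Fin m, pderiv' j (pderiv' j (fun w => κC j u w * f u w)) v

/-- The adjoint operator 𝒜† of the hybrid master equation operator. -/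
noncomputable def hmeOpAdj {l m : ℕ}
    (κD : Fin l → (Fin l → ℕ) → (Fin m → ℝ) → ℝ)
    (κC : Fin m → (Fin l → ℕ) → (Fin m → ℝ) → ℝ)
    (g : (Fin l → ℕ) → (Fin m → ℝ) → ℝ) :
    (Fin l → ℕ) → (Fin m → ℝ) → ℝ :=
  fun u v =>
    (∑ i : Fin l, κD i u v * (g (u + Pi.single i 1) v - g u v))
    + (∑ j : Fin m, κC j u v * pderiv' j (fun w => g u w) v)
    + (1 / 2) * ∑ j : Fin m, κC j u v * pderiv' j (pderiv' j (fun w => g u w)) v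

/-! Differentiating the product gives `∂ₜ(βπ) = β 𝒜π - π 𝒜†β`, so the claim is a pointwise
identity expressing `β 𝒜π - π 𝒜†β` through `βπ`. The jump terms match after clearing the
denominators `β > 0`. In each continuous coordinate `c ∂(log β) βπ = c (∂β) π`, and the drift
terms match by the product rule along the coordinate line through `v`. -/

lemma deriv_smoothing_drift {c b p : ℝ → ℝ} (hc : ContDiff ℝ 2 c) (hb : ContDiff ℝ 2 b)
    (hp : ContDiff ℝ 2 p) (hb0 : ∀ s, b s ≠ 0) (x : ℝ) :
    -deriv (fun s => (c s + c s * deriv (fun s' => Real.log (b s')) s) * (b s * p s)) x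
      + 1 / 2 * deriv (deriv fun s => c s * (b s * p s)) x
    = b x * (-deriv (fun s => c s * p s) x + 1 / 2 * deriv (deriv fun s => c s * p s) x)
      - p x * (c x * deriv b x + 1 / 2 * (c x * deriv (deriv b) x)) := by
  have hc' : Differentiable ℝ c := hc.differentiable two_ne_zero
  have hb' : Differentiable ℝ b := hb.differentiable two_ne_zero
  have hp' : Differentiable ℝ p := hp.differentiable two_ne_zero
  have hc'' : Differentiable ℝ (deriv c) := (hc.deriv' (n := 1)).differentiable one_ne_zero
  have hb'' : Differentiable ℝ (deriv b) := (hb.deriv' (n := 1)).differentiable one_ne_zero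
  have hp'' : Differentiable ℝ (deriv p) := (hp.deriv' (n := 1)).differentiable one_ne_zero
  have hlog : (fun s => (c s + c s * deriv (fun s' => Real.log (b s')) s) * (b s * p s))
      = fun s => c s * b s * p s + c s * deriv b s * p s := by
    funext s
    rw [deriv.log (hb' s) (hb0 s)]
    field_simp [hb0 s]
  have hcp : deriv (fun s => c s * p s) = fun s => deriv c s * p s + c s * deriv p s := by
    funext s
    simp (disch := fun_prop) only [deriv_fun_mul]
  have hcbp : deriv (fun s => c s * (b s * p s))
      = fun s => deriv c s * (b s * p s) + c s * (deriv b s * p s + b s * deriv p s) := by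
    funext s
    simp (disch := fun_prop) only [deriv_fun_mul]
  rw [hlog, hcbp, hcp]
  simp (disch := fun_prop) only [deriv_fun_mul, deriv_fun_add]
  ring

section PartialDeriv

variable {m : ℕ} (j : Fin m)

lemma pderiv'_const_mul (k : ℝ) (F : (Fin m → ℝ) → ℝ) :
    pderiv' j (fun w => k * F w) = fun w => k * pderiv' j F w := by
  funext w
  exact congrFun (deriv_const_mul_field' k) (w j)

lemma pderiv'_smoothing_drift {c b p : (Fin m → ℝ) → ℝ} (hc : ContDiff ℝ 2 c)
    (hb : ContDiff ℝ 2 b) (hp : ContDiff ℝ 2 p) (hb0 : ∀ w, b w ≠ 0) (v : Fin m → ℝ) :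
    -pderiv' j (fun w => (c w + c w * pderiv' j (fun w' => Real.log (b w')) w) * (b w * p w)) v
      + 1 / 2 * pderiv' j (pderiv' j fun w => c w * (b w * p w)) v
    = b v * (-pderiv' j (fun w => c w * p w) v
        + 1 / 2 * pderiv' j (pderiv' j fun w => c w * p w) v)
      - p v * (c v * pderiv' j b v + 1 / 2 * (c v * pderiv' j (pderiv' j b) v)) := by
  have hline := contDiff_update (𝕜 := ℝ) 2 v j
  have hrestrict := deriv_smoothing_drift (hc.comp hline) (hb.comp hline) (hp.comp hline)
    (fun s => hb0 _) (v j)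
  simp only [Function.comp_def, Function.update_eq_self] at hrestrict
  simpa only [pderiv', Function.update_idem, Function.update_self] using hrestrict

end PartialDeriv

section HybridMasterEquation

variable {l m : ℕ} (κD : Fin l → (Fin l → ℕ) → (Fin m → ℝ) → ℝ)
  (κC : Fin m → (Fin l → ℕ) → (Fin m → ℝ) → ℝ)

lemma hmeOp_const_mul (k : ℝ) (f : (Fin l → ℕ) → (Fin m → ℝ) → ℝ) (u : Fin l → ℕ)
    (v : Fin m → ℝ) :
    hmeOp κD κC (fun u' w => k * f u' w) u v = k * hmeOp κD κC f u v := by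
  have hjump : ∀ i, (if u i = 0 then 0
      else k * (κD i (u - Pi.single i 1) v * f (u - Pi.single i 1) v)) - k * (κD i u v * f u v)
      = k * ((if u i = 0 then 0 else κD i (u - Pi.single i 1) v * f (u - Pi.single i 1) v)
        - κD i u v * f u v) := by
    intro i
    split_ifs <;> ring
  simp only [hmeOp, mul_left_comm _ k, pderiv'_const_mul, hjump, ← Finset.mul_sum]
  ring

/-- The right-hand side of the evolution equation of a smoothing density `h` with backward
likelihood `g`. -/
noncomputable def smoothingOp (g h : (Fin l → ℕ) → (Fin m → ℝ) → ℝ) :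
    (Fin l → ℕ) → (Fin m → ℝ) → ℝ :=
  fun u v =>
    -(∑ j : Fin m, pderiv' j (fun w =>
        (κC j u w + κC j u w * pderiv' j (fun w' => Real.log (g u w')) w) * h u w) v)
    + (1 / 2) * (∑ j : Fin m, pderiv' j (pderiv' j (fun w => κC j u w * h u w)) v)
    + (∑ i : Fin l,
        if u i = 0 then 0
        else κD i (u - Pi.single i 1) v * h (u - Pi.single i 1) v
          * (g u v / g (u - Pi.single i 1) v))
    - (∑ i : Fin l, κD i u v * h u v * (g (u + Pi.single i 1) v / g u v))

lemma smoothingOp_mul {g f : (Fin l → ℕ) → (Fin m → ℝ) → ℝ} (hg0 : ∀ u w, g u w ≠ 0)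
    {u : Fin l → ℕ} (hκC : ∀ j, ContDiff ℝ 2 (κC j u)) (hg : ContDiff ℝ 2 (g u))
    (hf : ContDiff ℝ 2 (f u)) (v : Fin m → ℝ) :
    smoothingOp κD κC g (fun u' w => g u' w * f u' w) u v
      = g u v * hmeOp κD κC f u v - f u v * hmeOpAdj κD κC g u v := by
  have hdrift := Finset.sum_congr rfl fun j (_ : j ∈ Finset.univ) =>
    pderiv'_smoothing_drift j (hκC j) hg hf (hg0 u) v
  have hjump : ∀ i, (if u i = 0 then 0
      else κD i (u - Pi.single i 1) v * (g (u - Pi.single i 1) v * f (u - Pi.single i 1) v)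
        * (g u v / g (u - Pi.single i 1) v))
      - κD i u v * (g u v * f u v) * (g (u + Pi.single i 1) v / g u v)
      = g u v * ((if u i = 0 then 0 else κD i (u - Pi.single i 1) v * f (u - Pi.single i 1) v)
          - κD i u v * f u v)
        - f u v * (κD i u v * (g (u + Pi.single i 1) v - g u v)) := by
    intro i
    have hgu := hg0 u v
    have hgu' := hg0 (u - Pi.single i 1) v
    split_ifs <;> field_simp <;> ring
  have hjumps := Finset.sum_congr rfl fun i (_ : i ∈ Finset.univ) => hjump i
  simp only [Finset.sum_add_distrib, Finset.sum_sub_distrib, Finset.sum_neg_distrib,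
    ← Finset.mul_sum] at hdrift hjumps
  simp only [smoothingOp, hmeOp, hmeOpAdj, Finset.sum_sub_distrib]
  linear_combination hdrift + hjumps

end HybridMasterEquation

theorem smoothing_evolution_general {l m : ℕ}
    (κD : Fin l → (Fin l → ℕ) → (Fin m → ℝ) → ℝ)
    (κC : Fin m → (Fin l → ℕ) → (Fin m → ℝ) → ℝ)
    (π β πs : (Fin l → ℕ) → (Fin m → ℝ) → ℝ → ℝ)
    (Z : ℝ)
    (hβpos : ∀ u v t, 0 < β u v t)
    (hκC : ∀ j u, ContDiff ℝ 2 (fun v => κC j u v))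
    (hπv : ∀ u t, 0 ≤ t → ContDiff ℝ 2 (fun v => π u v t))
    (hβv : ∀ u t, 0 ≤ t → ContDiff ℝ 2 (fun v => β u v t))
    (hπd : ∀ u v t, 0 ≤ t → DifferentiableAt ℝ (fun s => π u v s) t)
    (hβd : ∀ u v t, 0 ≤ t → DifferentiableAt ℝ (fun s => β u v s) t)
    (hforward : ∀ u v t, 0 ≤ t →
      deriv (fun s => π u v s) t = hmeOp κD κC (fun u' v' => π u' v' t) u v)
    (hbackward : ∀ u v t, 0 ≤ t →
      deriv (fun s => β u v s) t = -hmeOpAdj κD κC (fun u' v' => β u' v' t) u v)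
    (hπs : ∀ u v t, πs u v t = Z⁻¹ * (β u v t * π u v t)) :
    ∀ u v t, 0 ≤ t →
      deriv (fun s => πs u v s) t =
        -(∑ j : Fin m, pderiv' j (fun w =>
            (κC j u w + κC j u w * pderiv' j (fun w' => Real.log (β u w' t)) w)
              * πs u w t) v)
        + (1 / 2) * (∑ j : Fin m, pderiv' j (pderiv' j (fun w => κC j u w * πs u w t)) v)
        + (∑ i : Fin l,
            if u i = 0 then 0
            else κD i (u - Pi.single i 1) v * πs (u - Pi.single i 1) v t
              * (β u v t / β (u - Pi.single i 1) v t))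
        - (∑ i : Fin l,
            κD i u v * πs u v t * (β (u + Pi.single i 1) v t / β u v t)) := by
  intro u v t ht
  have hπs_fun : (fun u' w => πs u' w t) = fun u' w => β u' w t * (Z⁻¹ * π u' w t) := by
    funext u' w
    rw [hπs, mul_left_comm]
  have hderiv : deriv (fun s => πs u v s) t = Z⁻¹ * (deriv (fun s => β u v s) t * π u v t
      + β u v t * deriv (fun s => π u v s) t) := by
    simp only [hπs]
    exact (((hβd u v t ht).hasDerivAt.mul (hπd u v t ht).hasDerivAt).const_mul Z⁻¹).deriv
  change _ = smoothingOp κD κC (fun u' w => β u' w t) (fun u' w => πs u' w t) u v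
  rw [hderiv, hforward u v t ht, hbackward u v t ht, hπs_fun,
    smoothingOp_mul κD κC (fun u' w => (hβpos u' w t).ne') (hκC · u) (hβv u t ht)
      (contDiff_const.mul (hπv u t ht)), hmeOp_const_mul]
  ring

/-- Evolution equation of the smoothing density `π̃ = Z̃⁻¹ β π`, where `π` solves the
forward hybrid master equation and `β` solves the backward hybrid master equation. -/
theorem smoothing_evolution {l m : ℕ} (hl : 1 ≤ l) (hm : 1 ≤ m)
    (κD : Fin l → (Fin l → ℕ) → (Fin m → ℝ) → ℝ)
    (κC : Fin m → (Fin l → ℕ) → (Fin m → ℝ) → ℝ)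
    (π β πs : (Fin l → ℕ) → (Fin m → ℝ) → ℝ → ℝ)
    (Z : ℝ) (hZ : 0 < Z)
    (hβpos : ∀ u v t, 0 < β u v t)
    (hκC : ∀ j u, ContDiff ℝ 2 (fun v => κC j u v))
    (hπv : ∀ u t, 0 ≤ t → ContDiff ℝ 2 (fun v => π u v t))
    (hβv : ∀ u t, 0 ≤ t → ContDiff ℝ 2 (fun v => β u v t))
    (hπd : ∀ u v t, 0 ≤ t → DifferentiableAt ℝ (fun s => π u v s) t)
    (hβd : ∀ u v t, 0 ≤ t → DifferentiableAt ℝ (fun s => β u v s) t)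
    (hforward : ∀ u v t, 0 ≤ t →
      deriv (fun s => π u v s) t = hmeOp κD κC (fun u' v' => π u' v' t) u v)
    (hbackward : ∀ u v t, 0 ≤ t →
      deriv (fun s => β u v s) t = -hmeOpAdj κD κC (fun u' v' => β u' v' t) u v)
    (hπs : ∀ u v t, πs u v t = Z⁻¹ * (β u v t * π u v t)) :
    ∀ u v t, 0 ≤ t →
      deriv (fun s => πs u v s) t =
        -(∑ j : Fin m, pderiv' j (fun w =>
            (κC j u w + κC j u w * pderiv' j (fun w' => Real.log (β u w' t)) w)
              * πs u w t) v)
        + (1 / 2) * (∑ j : Fin m, pderiv' j (pderiv' j (fun w => κC j u w * πs u w t)) v)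
        + (∑ i : Fin l,
            if u i = 0 then 0
            else κD i (u - Pi.single i 1) v * πs (u - Pi.single i 1) v t
              * (β u v t / β (u - Pi.single i 1) v t))
        - (∑ i : Fin l,
            κD i u v * πs u v t * (β (u + Pi.single i 1) v t / β u v t)) :=
  smoothing_evolution_general κD κC π β πs Z hβpos hκC hπv hβv hπd hβd hforward hbackward hπs
end

section
/- Continuous part of the smoothing evolution identity (single fast reaction): let κ, π, β : ℝ → ℝ be twice continuously differentiable with β everywhere strictly positive, and set π̃ = β π. Then for every v ∈ ℝ: β(v) [ −(κπ)′(v) + ½ (κπ)″(v) ] − π(v) [ κ(v) β′(v) + ½ κ(v) β″(v) ] = −[ (κ + κ·(log β)′) π̃ ]′(v) + ½ (κ π̃)″(v). -/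
/-!
Write `p = κ π`. Then `κ π̃ = p β`, and since `(log β)′ = β′ / β` with `β ≠ 0`, also
`κ (log β)′ π̃ = p β′`, so the modified drift flux is `p β + p β′`. After this
substitution both sides are polynomials in `p, p′, p″, β, β′, β″`, obtained from the Leibniz
rule to second order, and they agree.
-/

section Leibniz

variable {𝕜 : Type*} [NontriviallyNormedField 𝕜] {f g : 𝕜 → 𝕜}

theorem deriv_deriv_fun_mul (hf : ContDiff 𝕜 2 f) (hg : ContDiff 𝕜 2 g) (x : 𝕜) :
    deriv (deriv fun w => f w * g w) x =
      deriv (deriv f) x * g x + 2 * (deriv f x * deriv g x) + f x * deriv (deriv g) x := by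
  have hf₁ := hf.differentiable two_ne_zero
  have hg₁ := hg.differentiable two_ne_zero
  have hf₂ := hf.differentiable_deriv_two
  have hg₂ := hg.differentiable_deriv_two
  have hderiv : deriv (fun w => f w * g w) = fun w => deriv f w * g w + f w * deriv g w :=
    funext fun w => deriv_fun_mul (hf₁ w) (hg₁ w)
  rw [hderiv, deriv_fun_add ((hf₂ x).fun_mul (hg₁ x)) ((hf₁ x).fun_mul (hg₂ x)),
    deriv_fun_mul (hf₂ x) (hg₁ x), deriv_fun_mul (hf₁ x) (hg₂ x)]
  ring

theorem mul_fokkerPlanck_sub_mul_adjoint [CharZero 𝕜] {p β : 𝕜 → 𝕜} (hp : ContDiff 𝕜 2 p)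
    (hβ : ContDiff 𝕜 2 β) (v : 𝕜) :
    β v * (-deriv p v + 1 / 2 * deriv (deriv p) v)
        - p v * (deriv β v + 1 / 2 * deriv (deriv β) v)
      = -deriv (fun w => p w * β w + p w * deriv β w) v
        + 1 / 2 * deriv (deriv fun w => p w * β w) v := by
  have hp₁ := hp.differentiable two_ne_zero
  have hβ₁ := hβ.differentiable two_ne_zero
  rw [deriv_deriv_fun_mul hp hβ, deriv_fun_add ((hp₁ v).fun_mul (hβ₁ v))
      ((hp₁ v).fun_mul (hβ.differentiable_deriv_two v)),
    deriv_fun_mul (hp₁ v) (hβ₁ v), deriv_fun_mul (hp₁ v) (hβ.differentiable_deriv_two v)]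
  ring

end Leibniz

/-- Continuous part of the smoothing evolution identity (single fast reaction):
for `κ, π, β` twice continuously differentiable with `β > 0` and `π̃ = β π`,
`β [−(κπ)' + ½(κπ)''] − π [κ β' + ½ κ β'']
  = −[(κ + κ·(log β)') π̃]' + ½ (κ π̃)''`. -/
theorem smoothing_continuous_identity (κ π β πs : ℝ → ℝ)
    (hκ : ContDiff ℝ 2 κ) (hπ : ContDiff ℝ 2 π) (hβ : ContDiff ℝ 2 β)
    (hβpos : ∀ v, 0 < β v) (hπs : ∀ v, πs v = β v * π v) :
    ∀ v : ℝ,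
      β v * (-(deriv (fun w => κ w * π w) v)
          + (1 / 2) * deriv (deriv (fun w => κ w * π w)) v)
        - π v * (κ v * deriv β v + (1 / 2) * κ v * deriv (deriv β) v)
      = -(deriv (fun w => (κ w + κ w * deriv (fun x => Real.log (β x)) w) * πs w) v)
        + (1 / 2) * deriv (deriv (fun w => κ w * πs w)) v := by
  intro v
  have hflux : (fun w => κ w * πs w) = fun w => κ w * π w * β w := by
    funext w
    rw [hπs]
    ring
  have hdrift : (fun w => (κ w + κ w * deriv (fun x => Real.log (β x)) w) * πs w)
      = fun w => κ w * π w * β w + κ w * π w * deriv β w := by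
    funext w
    rw [hπs, deriv.log (hβ.differentiable two_ne_zero w) (hβpos w).ne']
    field_simp [(hβpos w).ne']
  rw [hflux, hdrift, ← mul_fokkerPlanck_sub_mul_adjoint (hκ.mul hπ) hβ v]
  ring
end
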